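/- arXiv:1312.3428 — 2 statements merged into one kernel-verified Lean document; each statement's English description precedes it below -/
import Mathlib

section
/- Let M be a matroid on E = {1,…,d}, let c ∈ E be an element that is not a coloop of M, and number the bases B_1,…,B_n of M so that c ∉ B_j for j ∈ [γ] and c ∈ B_j for j ∈ [n]∖[γ]. If f = ∏_{l=1}^{u} x_{j_l}·∏_{l=1}^{v} x_{k_l} − ∏_{l=1}^{u} x_{j'_l}·∏_{l=1}^{v} x_{k'_l} is a homogeneous binomial in the toric ideal J_M with all j_l, j'_l ∈ [γ] and all k_l, k'_l ∈ [n]∖[γ], then for every tuple I = (i_1,…,i_u) ∈ {1,2}^u, the binomial f^I = ∏_{l=1}^{u} x^{i_l}_{j_l}·∏_{l=1}^{v} x¹_{k_l} − ∏_{l=1}^{u} x^{i_l}_{j'_l}·∏_{l=1}^{v} x¹_{k'_l} lies in the toric ideal J_{D̃_M}. -/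
open MvPolynomial


section Enumerated

/-- The toric map `π_M` of an enumerated family of bases `B_1, …, B_n` of a matroid on
`{1, …, d}` : the variable `x_j` is sent to `∏_{l ∈ B_j} s_l`. -/
noncomputable def enumToricMap (K : Type) [Field K] {d n : ℕ} (B : Fin n → Finset (Fin d)) :
    MvPolynomial (Fin n) K →ₐ[K] MvPolynomial (Fin d) K :=
  aeval fun j => ∏ l ∈ B j, X l

/-- The toric ideal `J_M = ker π_M` of an enumerated family of bases. -/
noncomputable def enumToricIdeal (K : Type) [Field K] {d n : ℕ} (B : Fin n → Finset (Fin d)) :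
    Ideal (MvPolynomial (Fin n) K) :=
  RingHom.ker (enumToricMap K B).toRingHom

/-- The map `π̃_M` associated to the matrix `D̃_M`: the variable `Sum.inl j` is `x¹_j`
(sent to `S^{b_j}·w_1`) and `Sum.inr j` is `x²_j` (sent to `S^{b_j}·w_2`); the two extra
variables `w_1, w_2` of the target are `X (Sum.inr 0)` and `X (Sum.inr 1)`. -/
noncomputable def tildeToricMap (K : Type) [Field K] {d n γ : ℕ} (hγ : γ ≤ n)
    (B : Fin n → Finset (Fin d)) :
    MvPolynomial (Fin n ⊕ Fin γ) K →ₐ[K] MvPolynomial (Fin d ⊕ Fin 2) K :=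
  aeval (Sum.elim
    (fun j => (∏ l ∈ B j, X (Sum.inl l)) * X (Sum.inr 0))
    (fun j => (∏ l ∈ B (Fin.castLE hγ j), X (Sum.inl l)) * X (Sum.inr 1)))

/-- The variable `x^i_j` for a superscript `i ∈ {1,2}` (encoded as `Fin 2`, with `0 ↔ 1` and
`1 ↔ 2`) and `j ∈ [γ]`. -/
def xSup {n γ : ℕ} (hγ : γ ≤ n) (i : Fin 2) (a : Fin γ) : Fin n ⊕ Fin γ :=
  if i = 0 then Sum.inl (Fin.castLE hγ a) else Sum.inr a

/-- `f` is a binomial of the standard form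
`∏_{l<u} x_{j_l} · ∏_{l<v} x_{k_l} - ∏_{l<u} x_{j'_l} · ∏_{l<v} x_{k'_l}`,
where the `j`'s are in `[γ]` and the `k`'s are in `[n] ∖ [γ]`. -/
def IsStdBinomial {K : Type} [Field K] {n : ℕ} (γ : ℕ) (hγ : γ ≤ n)
    (f : MvPolynomial (Fin n) K) : Prop :=
  ∃ (u v : ℕ) (j j' : Fin u → Fin γ) (k k' : Fin v → Fin n),
    (∀ l, γ ≤ (k l : ℕ)) ∧ (∀ l, γ ≤ (k' l : ℕ)) ∧
    f = (∏ l, X (Fin.castLE hγ (j l))) * (∏ l, X (k l)) -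
        (∏ l, X (Fin.castLE hγ (j' l))) * (∏ l, X (k' l))

/-- The lifted set `F̃ = {f^I : f ∈ F, I ∈ {1,2}^{u_f}} ∪
{x¹_{j₂}x²_{j₁} - x¹_{j₁}x²_{j₂} : 1 ≤ j₁ < j₂ ≤ γ}`. -/
def liftedSet (K : Type) [Field K] {n : ℕ} {γ : ℕ} (hγ : γ ≤ n)
    (F : Set (MvPolynomial (Fin n) K)) : Set (MvPolynomial (Fin n ⊕ Fin γ) K) :=
  {g | ∃ (u v : ℕ) (j j' : Fin u → Fin γ) (k k' : Fin v → Fin n) (I : Fin u → Fin 2),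
      (∀ l, γ ≤ (k l : ℕ)) ∧ (∀ l, γ ≤ (k' l : ℕ)) ∧
      ((∏ l, X (Fin.castLE hγ (j l))) * (∏ l, X (k l)) -
        (∏ l, X (Fin.castLE hγ (j' l))) * (∏ l, X (k' l)) ∈ F) ∧
      g = (∏ l, X (xSup hγ (I l) (j l))) * (∏ l, X (Sum.inl (k l))) -
          (∏ l, X (xSup hγ (I l) (j' l))) * (∏ l, X (Sum.inl (k' l)))}
  ∪ {g | ∃ j₁ j₂ : Fin γ, j₁ < j₂ ∧
      g = X (Sum.inl (Fin.castLE hγ j₂)) * X (Sum.inr j₁) -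
          X (Sum.inl (Fin.castLE hγ j₁)) * X (Sum.inr j₂)}

end Enumerated

/-!
Since `π̃_M (x^i_j) = π_M (x_j) · w_i`, each monomial of `f^I` is sent to the image under `π_M` of
the corresponding monomial of `f` times `w_{i_1} ⋯ w_{i_u} · w_1^v`. This `w`-factor is the same for
both monomials, because the same `I` lifts both sides, so `π_M f = 0` forces `π̃_M (f^I) = 0`.
-/

section Lift

variable {K : Type} [Field K] {d n γ : ℕ} (hγ : γ ≤ n) (B : Fin n → Finset (Fin d))

theorem tildeToricMap_X_inl (m : Fin n) :
    tildeToricMap K hγ B (X (Sum.inl m)) =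
      rename Sum.inl (enumToricMap K B (X m)) * X (Sum.inr 0) := by
  simp [tildeToricMap, enumToricMap, map_prod]

theorem tildeToricMap_X_xSup (i : Fin 2) (a : Fin γ) :
    tildeToricMap K hγ B (X (xSup hγ i a)) =
      rename Sum.inl (enumToricMap K B (X (Fin.castLE hγ a))) * X (Sum.inr i) := by
  fin_cases i <;> simp [tildeToricMap, enumToricMap, xSup, map_prod]

theorem tildeToricMap_liftedMonomial {u v : ℕ} (I : Fin u → Fin 2) (j : Fin u → Fin γ)
    (k : Fin v → Fin n) :
    tildeToricMap K hγ B ((∏ l, X (xSup hγ (I l) (j l))) * ∏ l, X (Sum.inl (k l))) =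
      rename Sum.inl (enumToricMap K B ((∏ l, X (Fin.castLE hγ (j l))) * ∏ l, X (k l))) *
        ((∏ l, X (Sum.inr (I l))) * X (Sum.inr 0) ^ v) := by
  simp only [map_mul, map_prod, tildeToricMap_X_inl, tildeToricMap_X_xSup,
    Finset.prod_mul_distrib, Finset.prod_const, Finset.card_univ, Fintype.card_fin]
  ring

end Lift

theorem statement3_general (K : Type) [Field K] {d n γ : ℕ}
    (B : Fin n → Finset (Fin d))
    (hγ : γ ≤ n)
    (u v : ℕ) (j j' : Fin u → Fin γ) (k k' : Fin v → Fin n)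
    (hf : (∏ l, X (Fin.castLE hγ (j l))) * (∏ l, X (k l)) -
          (∏ l, X (Fin.castLE hγ (j' l))) * (∏ l, X (k' l)) ∈ enumToricIdeal K B)
    (I : Fin u → Fin 2) :
    (∏ l, X (xSup hγ (I l) (j l))) * (∏ l, X (Sum.inl (k l))) -
      (∏ l, X (xSup hγ (I l) (j' l))) * (∏ l, X (Sum.inl (k' l)))
      ∈ RingHom.ker (tildeToricMap K hγ B).toRingHom := by
  rw [enumToricIdeal, RingHom.mem_ker, AlgHom.toRingHom_eq_coe, RingHom.coe_coe, map_sub,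
    sub_eq_zero] at hf
  rw [RingHom.mem_ker, AlgHom.toRingHom_eq_coe, RingHom.coe_coe, map_sub, sub_eq_zero,
    tildeToricMap_liftedMonomial, tildeToricMap_liftedMonomial, hf]

/-- If `f` is a standard-form binomial in `J_M`, then for every `I ∈ {1,2}^u`
the lifted binomial `f^I` lies in `J_{D̃_M}`. -/
theorem statement3 (K : Type) [Field K] {d n γ : ℕ}
    (M : Matroid (Fin d)) (hE : M.E = Set.univ)
    (B : Fin n → Finset (Fin d)) (hBinj : Function.Injective B)
    (hBall : ∀ S : Finset (Fin d), M.IsBase ↑S ↔ ∃ j, B j = S)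
    (c : Fin d) (hc : ¬ ∀ S, M.IsBase S → c ∈ S)
    (hγ : γ ≤ n) (hsplit : ∀ j : Fin n, c ∉ B j ↔ (j : ℕ) < γ)
    (u v : ℕ) (j j' : Fin u → Fin γ) (k k' : Fin v → Fin n)
    (hk : ∀ l, γ ≤ (k l : ℕ)) (hk' : ∀ l, γ ≤ (k' l : ℕ))
    (hf : (∏ l, X (Fin.castLE hγ (j l))) * (∏ l, X (k l)) -
          (∏ l, X (Fin.castLE hγ (j' l))) * (∏ l, X (k' l)) ∈ enumToricIdeal K B)
    (I : Fin u → Fin 2) :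
    (∏ l, X (xSup hγ (I l) (j l))) * (∏ l, X (Sum.inl (k l))) -
      (∏ l, X (xSup hγ (I l) (j' l))) * (∏ l, X (Sum.inl (k' l)))
      ∈ RingHom.ker (tildeToricMap K hγ B).toRingHom :=
  statement3_general K B hγ u v j j' k k' hf I
end

section
/- If M is a matroid on E = {1,…,d} whose toric ideal J_M has a Gröbner basis (with respect to some monomial order) consisting of quadratic binomials, then for every c ∈ E the toric ideal of the parallel extension of M at c by d+1, i.e. of the matroid (M* +_c (d+1))*, has a Gröbner basis (with respect to some monomial order) consisting of quadratic binomials. -/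
open MvPolynomial

section Groebner
variable {σ : Type} {K : Type} [Field K]

/-- The leading exponent (exponent of the initial monomial) of a polynomial
with respect to a monomial order. -/
noncomputable def mLeadExp (m : MonomialOrder.{0,0} σ) (f : MvPolynomial σ K) : σ →₀ ℕ :=
  m.toSyn.symm (f.support.sup fun a => m.toSyn a)

/-- The initial ideal of `I` with respect to a monomial order: the ideal generated by the
initial monomials of the nonzero elements of `I`. -/
noncomputable def mInitialIdeal (m : MonomialOrder.{0,0} σ) (I : Ideal (MvPolynomial σ K)) :
    Ideal (MvPolynomial σ K) :=
  Ideal.span {g | ∃ f ∈ I, f ≠ 0 ∧ g = monomial (mLeadExp m f) (1 : K)}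

/-- `G` is a Gröbner basis of the ideal `I` with respect to the monomial order `m`. -/
def IsGroebnerBasis (m : MonomialOrder.{0,0} σ) (I : Ideal (MvPolynomial σ K))
    (G : Set (MvPolynomial σ K)) : Prop :=
  G ⊆ (I : Set (MvPolynomial σ K)) ∧ (0 : MvPolynomial σ K) ∉ G ∧
    Ideal.span ((fun f => monomial (mLeadExp m f) (1 : K)) '' G) = mInitialIdeal m I

/-- The `ω`-weight of an exponent vector. -/
def wtSum (ω : σ → ℕ) (a : σ →₀ ℕ) : ℕ := a.sum fun s e => ω s * e

end Groebner

section Toric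

/-- The toric (bases monomial) map of a matroid: the variables are indexed by the bases of `M`,
and the variable of a basis `B` is sent to `∏_{l ∈ B} s_l`. -/
noncomputable def matroidToricMap (K : Type) [Field K] {α : Type} [Fintype α] [DecidableEq α]
    (M : Matroid α) :
    MvPolynomial {B : Finset α // M.IsBase ↑B} K →ₐ[K] MvPolynomial α K :=
  aeval fun b => ∏ l ∈ b.1, X l

/-- The toric ideal `J_M` of a matroid `M`. -/
noncomputable def matroidToricIdeal (K : Type) [Field K] {α : Type} [Fintype α] [DecidableEq α]
    (M : Matroid α) : Ideal (MvPolynomial {B : Finset α // M.IsBase ↑B} K) :=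
  RingHom.ker (matroidToricMap K M).toRingHom

/-- `G` consists of quadratic binomials `x_i x_j - x_k x_l`. -/
def IsQuadBinomialSet {σ K : Type} [Field K] (G : Set (MvPolynomial σ K)) : Prop :=
  ∀ f ∈ G, ∃ i j k l : σ, f = X i * X j - X k * X l

/-- The ideal `I` is generated by quadratic binomials. -/
def GeneratedByQuadBinomials {σ K : Type} [Field K] (I : Ideal (MvPolynomial σ K)) : Prop :=
  ∃ G : Set (MvPolynomial σ K), IsQuadBinomialSet G ∧ Ideal.span G = I

/-- The ideal `I` has a Gröbner basis, with respect to some monomial order,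
consisting of quadratic binomials. -/
def HasQuadraticGroebnerBasis {σ K : Type} [Field K] (I : Ideal (MvPolynomial σ K)) : Prop :=
  ∃ (m : MonomialOrder.{0,0} σ) (G : Set (MvPolynomial σ K)),
    IsQuadBinomialSet G ∧ IsGroebnerBasis m I G

end Toric

/-!
The bases of `N = (M✶ +_c (d+1))✶` are the bases `A` of `M`, with variable `x_A` (`lift A`),
and, for the bases `A ∋ c`, the sets `A - c + (d+1)`, with variable `y_A` (`liftSwap A`).
Substituting `s_c` for `s_{d+1}` turns the toric map of `N` into that of `M` after the projection
`x_A, y_A ↦ x_A`; hence two monomials of `N` have the same degree iff their projections have the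
same degree and they contain equally many `y`'s.

For toric ideals, a quadratic Gröbner basis exists iff every monomial that is not the least of
its degree is divisible by the larger side of a degree-preserving quadratic binomial. Order the
monomials of `N` by their projections, using an order for which `J_M` has a quadratic Gröbner
basis, and break ties lexicographically with `x_A < y_A < x_B` for `A < B`. A monomial with a
non-minimal projection is reduced by a lift of a quadratic binomial of `M`. If its projection is
that of a smaller monomial, it is divisible by some `x_A y_B` with `A < B`, which the binomial
`x_A y_B - y_A x_B` reduces.
-/

open Finsupp
open scoped MonomialOrder

namespace Finsupp

variable {α β : Type*} {f : α → β}

lemma linearCombination_single_add_single {M : Type*} [AddCommMonoid M] (e : α → M) (i j : α) :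
    linearCombination ℕ e (single i 1 + single j 1) = e i + e j := by
  simp

lemma exists_single_le_of_single_le_mapDomain {a : α →₀ ℕ} {i : β}
    (h : single i 1 ≤ mapDomain f a) : ∃ x, f x = i ∧ single x 1 ≤ a := by
  classical
  rw [single_le_iff] at h
  obtain ⟨x, hx, rfl⟩ := Finset.mem_image.mp
    (mapDomain_support (mem_support_iff.mpr (Nat.one_le_iff_ne_zero.mp h)))
  exact ⟨x, rfl, single_le_iff.mpr (Nat.one_le_iff_ne_zero.mpr (mem_support_iff.mp hx))⟩

lemma exists_pair_le_of_pair_le_mapDomain {a : α →₀ ℕ} {i j : β}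
    (h : single i 1 + single j 1 ≤ mapDomain f a) :
    ∃ x y, f x = i ∧ f y = j ∧ single x 1 + single y 1 ≤ a := by
  obtain ⟨x, rfl, hx⟩ := exists_single_le_of_single_le_mapDomain (le_of_add_le_left h)
  obtain ⟨a', rfl⟩ := exists_add_of_le hx
  rw [mapDomain_add, mapDomain_single, add_le_add_iff_left] at h
  obtain ⟨y, rfl, hy⟩ := exists_single_le_of_single_le_mapDomain h
  exact ⟨x, y, rfl, rfl, add_le_add le_rfl hy⟩

lemma single_add_single_le {a : α →₀ ℕ} {x y : α} (hxy : x ≠ y) (hx : 1 ≤ a x)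
    (hy : 1 ≤ a y) :
    single x 1 + single y 1 ≤ a := by
  classical
  intro z
  simp only [coe_add, Pi.add_apply, single_apply]
  split_ifs <;> subst_vars <;> simp_all

lemma mapDomain_apply_of_fiber {M : Type*} [AddCommMonoid M] {b : β} {s : Finset α}
    (hs : ∀ x, f x = b ↔ x ∈ s) (a : α →₀ M) : mapDomain f a b = ∑ x ∈ s, a x := by
  classical
  induction a using Finsupp.induction_linear with
  | zero => simp
  | add a a' ha ha' => simp [mapDomain_add, ha, ha', Finset.sum_add_distrib]
  | single x n => simp [single_apply, hs]

lemma toLex_pair_lt_pair [LinearOrder α] {u v w x : α} (hv : u < v) (hw : u < w) (hx : u < x) :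
    toLex (single v 1 + single w 1) < toLex (single u 1 + single x 1) := by
  classical
  refine Lex.lt_iff.mpr ⟨u, fun j hj => ?_, ?_⟩
  · simp [hj.ne', (hj.trans hv).ne', (hj.trans hw).ne', (hj.trans hx).ne']
  · simp [single_apply, hv.ne, hw.ne]

lemma linearCombination_apply_eq_sum {γ : Type*} [Fintype α] (e : α → γ →₀ ℕ)
    (a : α →₀ ℕ) (y : γ) : linearCombination ℕ e a y = ∑ x, a x * e x y := by
  simp [linearCombination_apply, Finsupp.sum_fintype, Finsupp.finsetSum_apply]

end Finsupp

section ToricMap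

variable {σ τ R : Type*} [CommSemiring R] {e : σ → τ →₀ ℕ}
  {π : MvPolynomial σ R →ₐ[R] MvPolynomial τ R}

lemma X_mul_X_eq_monomial (i j : σ) :
    (X i * X j : MvPolynomial σ R) = monomial (single i 1 + single j 1) 1 := by
  rw [X, X, monomial_mul, one_mul]

lemma map_monomial_of_map_X (hπ : ∀ z, π (X z) = monomial (e z) 1) (a : σ →₀ ℕ) (r : R) :
    π (monomial a r) = monomial (linearCombination ℕ e a) r := by
  rw [aeval_unique π, aeval_monomial, Finsupp.prod, linearCombination_apply, Finsupp.sum,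
    algebraMap_eq]
  simp only [Function.comp_apply, hπ, monomial_pow, one_pow]
  rw [← monomial_sum_one, C_mul_monomial, mul_one]

lemma map_eq_sum_monomial (hπ : ∀ z, π (X z) = monomial (e z) 1) (f : MvPolynomial σ R) :
    π f = ∑ a ∈ f.support, monomial (linearCombination ℕ e a) (coeff a f) := by
  conv_lhs => rw [f.as_sum]
  simp only [map_sum, map_monomial_of_map_X hπ]

lemma exists_ne_linearCombination_eq (hπ : ∀ z, π (X z) = monomial (e z) 1)
    {f : MvPolynomial σ R} (hf : π f = 0) {a : σ →₀ ℕ} (ha : a ∈ f.support) :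
    ∃ b ∈ f.support, b ≠ a ∧ linearCombination ℕ e b = linearCombination ℕ e a := by
  classical
  by_contra! hn
  have hcoeff : coeff (linearCombination ℕ e a) (π f) = coeff a f := by
    rw [map_eq_sum_monomial hπ, coeff_sum, Finset.sum_eq_single a]
    · simp
    · exact fun b hb hba => by rw [coeff_monomial, if_neg (hn b hb hba)]
    · exact fun h => absurd ha h
  rw [hf, coeff_zero] at hcoeff
  exact MvPolynomial.mem_support_iff.mp ha hcoeff.symm

end ToricMap

section Binomials

variable {σ τ R : Type*} [CommRing R] [Nontrivial R] {e : σ → τ →₀ ℕ}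
  {π : MvPolynomial σ R →ₐ[R] MvPolynomial τ R}

lemma monomial_sub_monomial_ne_zero {a b : σ →₀ ℕ} (h : a ≠ b) :
    (monomial a (1 : R) - monomial b 1) ≠ 0 :=
  sub_ne_zero.mpr ((monomial_left_injective one_ne_zero).ne h)

lemma MonomialOrder.degree_monomial_sub_monomial (m : MonomialOrder σ) {a b : σ →₀ ℕ}
    (h : b ≺[m] a) : m.degree (monomial a (1 : R) - monomial b 1) = a := by
  classical
  rw [m.degree_sub_of_lt] <;> simp [m.degree_monomial, h]

lemma X_mul_X_sub_X_mul_X_mem_ker_iff (hπ : ∀ z, π (X z) = monomial (e z) 1) {i j k l : σ} :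
    X i * X j - X k * X l ∈ RingHom.ker π.toRingHom ↔ e i + e j = e k + e l := by
  change π _ = 0 ↔ _
  rw [X_mul_X_eq_monomial, X_mul_X_eq_monomial, map_sub, map_monomial_of_map_X hπ,
    map_monomial_of_map_X hπ, sub_eq_zero, linearCombination_single_add_single,
    linearCombination_single_add_single]
  exact (monomial_left_injective one_ne_zero).eq_iff

end Binomials

section ToricGroebner

variable {σ τ K : Type} [Field K] {e : σ → τ →₀ ℕ}
  {π : MvPolynomial σ K →ₐ[K] MvPolynomial τ K} (m : MonomialOrder.{0,0} σ)

theorem isGroebnerBasis_ker_iff (hπ : ∀ z, π (X z) = monomial (e z) 1)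
    {G : Set (MvPolynomial σ K)} (hG : G ⊆ RingHom.ker π.toRingHom) (h0 : 0 ∉ G) :
    IsGroebnerBasis m (RingHom.ker π.toRingHom) G ↔
      ∀ a b, linearCombination ℕ e a = linearCombination ℕ e b → b ≺[m] a →
        ∃ g ∈ G, m.degree g ≤ a := by
  have hspan : ∀ a, monomial a (1 : K) ∈
      Ideal.span ((fun f => monomial (mLeadExp m f) (1 : K)) '' G) ↔
        ∃ g ∈ G, m.degree g ≤ a := by
    classical
    intro a
    rw [← Set.image_image (fun s => monomial s (1 : K)), mem_ideal_span_monomial_image,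
      support_monomial, if_neg one_ne_zero]
    simp only [Finset.mem_singleton, forall_eq, Set.exists_mem_image]
    rfl
  refine ⟨fun hGB a b hab hlt => ?_, fun H => ⟨hG, h0, le_antisymm ?_ ?_⟩⟩
  · rw [← hspan, hGB.2.2]
    refine Ideal.subset_span ⟨_, ?_, monomial_sub_monomial_ne_zero (hlt.ne' ∘ congrArg m.toSyn),
      by rw [mLeadExp, ← MonomialOrder.degree, m.degree_monomial_sub_monomial hlt]⟩
    show π _ = 0
    rw [map_sub, map_monomial_of_map_X hπ, map_monomial_of_map_X hπ, hab, sub_self]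
  · exact Ideal.span_le.mpr fun _ ⟨g, hg, hgm⟩ =>
      Ideal.subset_span ⟨g, hG hg, fun h => h0 (h ▸ hg), hgm.symm⟩
  · rw [mInitialIdeal, Ideal.span_le]
    rintro _ ⟨f, hf, hf0, rfl⟩
    have ha := (m.degree_mem_support_iff f).mpr hf0
    obtain ⟨b, hb, hba, hdeg⟩ := exists_ne_linearCombination_eq hπ hf ha
    exact (hspan _).mpr (H _ b hdeg.symm
      ((m.le_degree hb).lt_of_ne fun h => hba (m.toSyn.injective h)))

def HasQuadraticMoves (e : σ → τ →₀ ℕ) : Prop :=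
  ∀ a b, linearCombination ℕ e a = linearCombination ℕ e b → b ≺[m] a →
    ∃ i j k l, single i 1 + single j 1 ≤ a ∧ e i + e j = e k + e l ∧
      single k 1 + single l 1 ≺[m] single i 1 + single j 1

variable (K) in
def quadraticMoves (e : σ → τ →₀ ℕ) : Set (MvPolynomial σ K) :=
  {f | ∃ i j k l, f = X i * X j - X k * X l ∧ e i + e j = e k + e l ∧
    single k 1 + single l 1 ≺[m] single i 1 + single j 1}

lemma isGroebnerBasis_quadraticMoves (hπ : ∀ z, π (X z) = monomial (e z) 1)
    (h : HasQuadraticMoves m e) :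
    IsGroebnerBasis m (RingHom.ker π.toRingHom) (quadraticMoves K m e) := by
  have hdeg : ∀ {i j k l : σ}, single k 1 + single l 1 ≺[m] single i 1 + single j 1 →
      m.degree (X i * X j - X k * X l : MvPolynomial σ K) = single i 1 + single j 1 :=
    fun hlt => by
      rw [X_mul_X_eq_monomial, X_mul_X_eq_monomial, m.degree_monomial_sub_monomial hlt]
  have hsub : quadraticMoves K m e ⊆ RingHom.ker π.toRingHom := by
    rintro _ ⟨i, j, k, l, rfl, he, -⟩
    exact (X_mul_X_sub_X_mul_X_mem_ker_iff hπ).mpr he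
  have h0 : 0 ∉ quadraticMoves K m e := by
    rintro ⟨i, j, k, l, hf, -, hlt⟩
    rw [X_mul_X_eq_monomial, X_mul_X_eq_monomial] at hf
    exact monomial_sub_monomial_ne_zero (hlt.ne' ∘ congrArg m.toSyn) hf.symm
  refine (isGroebnerBasis_ker_iff m hπ hsub h0).mpr fun a b hab hlt => ?_
  obtain ⟨i, j, k, l, hle, he, hlt⟩ := h a b hab hlt
  exact ⟨_, ⟨i, j, k, l, rfl, he, hlt⟩, (hdeg hlt).symm ▸ hle⟩

lemma hasQuadraticMoves_of_isGroebnerBasis (hπ : ∀ z, π (X z) = monomial (e z) 1)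
    {G : Set (MvPolynomial σ K)} (hG : IsQuadBinomialSet G)
    (hGB : IsGroebnerBasis m (RingHom.ker π.toRingHom) G) : HasQuadraticMoves m e := by
  intro a b hab hlt
  obtain ⟨g, hg, hle⟩ := (isGroebnerBasis_ker_iff m hπ hGB.1 hGB.2.1).mp hGB a b hab hlt
  obtain ⟨i, j, k, l, rfl⟩ := hG g hg
  have he := (X_mul_X_sub_X_mul_X_mem_ker_iff hπ).mp (hGB.1 hg)
  rw [X_mul_X_eq_monomial, X_mul_X_eq_monomial] at hle
  rcases lt_trichotomy (m.toSyn (single i 1 + single j 1)) (m.toSyn (single k 1 + single l 1))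
    with hlt | heq | hgt
  · rw [← neg_sub, m.degree_neg, m.degree_monomial_sub_monomial hlt] at hle
    exact ⟨k, l, i, j, hle, he.symm, hlt⟩
  · refine absurd ?_ (hGB.2.1)
    rw [X_mul_X_eq_monomial, X_mul_X_eq_monomial, m.toSyn.injective heq, sub_self] at hg
    exact hg
  · rw [m.degree_monomial_sub_monomial hgt] at hle
    exact ⟨i, j, k, l, hle, he, hgt⟩

theorem hasQuadraticGroebnerBasis_ker_iff (hπ : ∀ z, π (X z) = monomial (e z) 1) :
    HasQuadraticGroebnerBasis (RingHom.ker π.toRingHom) ↔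
      ∃ m : MonomialOrder.{0,0} σ, HasQuadraticMoves m e := by
  refine ⟨fun ⟨m, G, hG, hGB⟩ => ⟨m, hasQuadraticMoves_of_isGroebnerBasis m hπ hG hGB⟩,
    fun ⟨m, h⟩ => ⟨m, quadraticMoves K m e, ?_, isGroebnerBasis_quadraticMoves m hπ h⟩⟩
  rintro _ ⟨i, j, k, l, rfl, -⟩
  exact ⟨i, j, k, l, rfl⟩

end ToricGroebner

namespace MonomialOrder

variable {σ τ : Type*} (φ : σ → τ) (m : MonomialOrder τ) (m₂ : MonomialOrder σ)

noncomputable def comapLexKey : (σ →₀ ℕ) →+ m.syn ×ₗ m₂.syn where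
  toFun a := toLex (m.toSyn (mapDomain φ a), m₂.toSyn a)
  map_zero' := by simp
  map_add' _ _ := by simp [mapDomain_add]; rfl

lemma comapLexKey_injective : Function.Injective (comapLexKey φ m m₂) := fun _ _ h =>
  m₂.toSyn.injective (congrArg (fun x => (ofLex x).2) h)

-- `toSyn` has to be an equivalence, so the ordered monoid is the range of the injective key.
noncomputable def comapLex : MonomialOrder σ where
  syn := AddMonoidHom.mrange (comapLexKey φ m m₂)
  toSyn :=
    AddEquiv.ofBijective (F := (σ →₀ ℕ) →+ AddMonoidHom.mrange (comapLexKey φ m m₂))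
    (comapLexKey φ m m₂).mrangeRestrict
    ⟨fun _ _ h => comapLexKey_injective φ m m₂ (congrArg Subtype.val h),
      (comapLexKey φ m m₂).mrangeRestrict_surjective⟩
  toSyn_monotone a b hab := by
    change toLex (m.toSyn (mapDomain φ a), m₂.toSyn a) ≤
      toLex (m.toSyn (mapDomain φ b), m₂.toSyn b)
    rcases (m.toSyn_monotone (mapDomain_mono hab)).lt_or_eq with h | h
    · exact Prod.Lex.toLex_le_toLex.mpr (Or.inl h)
    · exact Prod.Lex.toLex_le_toLex.mpr (Or.inr ⟨h, m₂.toSyn_monotone hab⟩)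

lemma comapLex_lt_iff {a b : σ →₀ ℕ} :
    a ≺[comapLex φ m m₂] b ↔ mapDomain φ a ≺[m] mapDomain φ b ∨
      mapDomain φ a = mapDomain φ b ∧ a ≺[m₂] b := by
  change toLex (m.toSyn (mapDomain φ a), m₂.toSyn a) <
    toLex (m.toSyn (mapDomain φ b), m₂.toSyn b) ↔ _
  rw [Prod.Lex.toLex_lt_toLex, m.toSyn.injective.eq_iff]

end MonomialOrder

section Matroid

variable {α : Type}

abbrev Bases (M : Matroid α) : Type := {B : Finset α // M.IsBase ↑B}

noncomputable def baseExponent {M : Matroid α} (B : Bases M) : α →₀ ℕ :=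
  ∑ l ∈ B.1, single l 1

variable {M : Matroid α}

lemma baseExponent_apply [DecidableEq α] (B : Bases M) (x : α) :
    baseExponent B x = if x ∈ B.1 then 1 else 0 := by
  simp [baseExponent, Finsupp.finsetSum_apply, single_apply]

lemma mapDomain_baseExponent {β : Type} (f : α → β) (B : Bases M) :
    mapDomain f (baseExponent B) = ∑ l ∈ B.1, single (f l) 1 := by
  simp [baseExponent, mapDomain_finsetSum]

lemma matroidToricMap_X (K : Type) [Field K] [Fintype α] [DecidableEq α] (B : Bases M) :
    matroidToricMap K M (X B) = monomial (baseExponent B) 1 := by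
  rw [matroidToricMap, aeval_X, baseExponent, monomial_sum_one]
  rfl

end Matroid

section ParallelExtension

open Set

variable {d : ℕ}

def IsParallelExtension (M : Matroid (Fin d)) (c : Fin d) (N : Matroid (Fin (d + 1))) : Prop :=
  ∀ S, N.IsBase S ↔ (∃ A, M.IsBase A ∧ S = Fin.castSucc '' A) ∨
    ∃ A, M.IsBase A ∧ c ∈ A ∧ S = Fin.castSucc '' (A \ {c}) ∪ {Fin.last d}

lemma compl_image_castSucc_union_last (T : Set (Fin d)) :
    (Fin.castSucc '' T ∪ {Fin.last d})ᶜ = Fin.castSucc '' Tᶜ := by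
  ext x
  induction x using Fin.lastCases <;> simp [Fin.castSucc_ne_last]

lemma Matroid.dual_isBase_iff_of_ground_eq_univ {β : Type} {N : Matroid β} (hE : N.E = univ)
    {S : Set β} : N✶.IsBase S ↔ N.IsBase Sᶜ := by
  rw [Matroid.dual_isBase_iff (hE ▸ subset_univ S), hE, compl_eq_univ_sdiff]

theorem isParallelExtension_dual {M : Matroid (Fin d)} (hE : M.E = Set.univ) {c : Fin d}
    {M' : Matroid (Fin (d + 1))} (hE' : M'.E = Set.univ)
    (hM' : ∀ S : Set (Fin (d + 1)), M'.IsBase S ↔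
      ((∃ B : Set (Fin d), (M✶).IsBase B ∧ S = Fin.castSucc '' B ∪ {Fin.last d}) ∨
       (∃ B : Set (Fin d), (M✶).IsBase B ∧ c ∉ B ∧
          S = Fin.castSucc '' B ∪ {Fin.castSucc c}))) :
    IsParallelExtension M c M'✶ := by
  intro S
  rw [Matroid.dual_isBase_iff_of_ground_eq_univ hE', hM']
  refine or_congr ?_ ?_ <;> rw [compl_surjective.exists] <;> refine exists_congr fun A => ?_
  · rw [Matroid.dual_isBase_iff_of_ground_eq_univ hE, compl_compl, compl_eq_comm,
      compl_image_castSucc_union_last, compl_compl, eq_comm]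
  · rw [Matroid.dual_isBase_iff_of_ground_eq_univ hE, compl_compl, mem_compl_iff, not_not,
      union_comm, ← image_singleton, ← image_union, ← Set.compl_sdiff, compl_eq_comm,
      ← compl_image_castSucc_union_last, compl_compl, eq_comm]

def mergeLast (c : Fin d) : Fin (d + 1) → Fin d := Fin.lastCases c id

@[simp] lemma mergeLast_last (c : Fin d) : mergeLast c (Fin.last d) = c := Fin.lastCases_last

@[simp] lemma mergeLast_castSucc (c i : Fin d) : mergeLast c i.castSucc = i :=
  Fin.lastCases_castSucc _

lemma mapDomain_mergeLast_apply (c i : Fin d) (D : Fin (d + 1) →₀ ℕ) :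
    mapDomain (mergeLast c) D i = D i.castSucc + if i = c then D (Fin.last d) else 0 := by
  classical
  split_ifs with hi
  · subst hi
    rw [mapDomain_apply_of_fiber (s := {i.castSucc, Fin.last d}),
      Finset.sum_pair (Fin.castSucc_ne_last i)]
    intro x
    induction x using Fin.lastCases <;> simp [eq_comm, Fin.castSucc_ne_last]
  · rw [mapDomain_apply_of_fiber (s := {i.castSucc}), Finset.sum_singleton, add_zero]
    intro x
    induction x using Fin.lastCases <;> simp [Ne.symm hi, (Fin.castSucc_ne_last i).symm]

lemma eq_of_mapDomain_mergeLast_eq {c : Fin d} {D D' : Fin (d + 1) →₀ ℕ}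
    (h : mapDomain (mergeLast c) D = mapDomain (mergeLast c) D')
    (hl : D (Fin.last d) = D' (Fin.last d)) : D = D' := by
  ext x
  induction x using Fin.lastCases with
  | last => exact hl
  | cast i =>
    have := congrArg (· i) h
    simp only [mapDomain_mergeLast_apply, hl] at this
    omega

namespace IsParallelExtension

variable {M : Matroid (Fin d)} {c : Fin d} {N : Matroid (Fin (d + 1))}
  (hN : IsParallelExtension M c N)

def lift (A : Bases M) : Bases N :=
  ⟨A.1.map Fin.castSuccEmb, (hN _).mpr (Or.inl ⟨A.1, A.2, by simp⟩)⟩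

def liftSwap (A : Bases M) (hc : c ∈ A.1) : Bases N :=
  ⟨insert (Fin.last d) ((A.1.erase c).map Fin.castSuccEmb),
    (hN _).mpr (Or.inr ⟨A.1, A.2, hc, by
      simp [Set.union_singleton, Set.image_sdiff (Fin.castSucc_injective d)]⟩)⟩

lemma last_not_mem_lift (A : Bases M) : Fin.last d ∉ (hN.lift A).1 := by
  simp [lift, Fin.castSucc_ne_last]

lemma last_mem_liftSwap (A : Bases M) (hc : c ∈ A.1) : Fin.last d ∈ (hN.liftSwap A hc).1 :=
  Finset.mem_insert_self _ _

lemma exists_eq_lift_or_liftSwap (z : Bases N) :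
    (∃ A, z = hN.lift A) ∨ ∃ A hc, z = hN.liftSwap A hc := by
  classical
  rcases (hN _).mp z.2 with ⟨A, hA, hz⟩ | ⟨A, hA, hc, hz⟩
  · refine Or.inl ⟨⟨A.toFinset, by simpa⟩, Subtype.ext (Finset.coe_injective ?_)⟩
    simp [lift, hz]
  · refine Or.inr ⟨⟨A.toFinset, by simpa⟩, by simpa, Subtype.ext (Finset.coe_injective ?_)⟩
    simp [liftSwap, hz, Set.union_singleton, Set.image_sdiff (Fin.castSucc_injective d)]

lemma image_mergeLast_lift (A : Bases M) : (hN.lift A).1.image (mergeLast c) = A.1 := by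
  simp [lift, Finset.map_eq_image, Finset.image_image, Function.comp_def]

lemma image_mergeLast_liftSwap (A : Bases M) (hc : c ∈ A.1) :
    (hN.liftSwap A hc).1.image (mergeLast c) = A.1 := by
  simp [liftSwap, Finset.map_eq_image, Finset.image_image, Function.comp_def,
    Finset.insert_erase hc]

def proj (z : Bases N) : Bases M :=
  ⟨z.1.image (mergeLast c), by
    obtain ⟨A, rfl⟩ | ⟨A, hc, rfl⟩ := hN.exists_eq_lift_or_liftSwap z
    · simpa [image_mergeLast_lift] using A.2
    · simpa [image_mergeLast_liftSwap] using A.2⟩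

@[simp] lemma proj_lift (A : Bases M) : hN.proj (hN.lift A) = A :=
  Subtype.ext (hN.image_mergeLast_lift A)

@[simp] lemma proj_liftSwap (A : Bases M) (hc : c ∈ A.1) : hN.proj (hN.liftSwap A hc) = A :=
  Subtype.ext (hN.image_mergeLast_liftSwap A hc)

lemma lift_ne_liftSwap (A B : Bases M) (hc : c ∈ B.1) : hN.lift A ≠ hN.liftSwap B hc :=
  fun h => hN.last_not_mem_lift A (h ▸ hN.last_mem_liftSwap B hc)

lemma proj_eq_iff {z : Bases N} {A : Bases M} :
    hN.proj z = A ↔ z = hN.lift A ∨ ∃ hc, z = hN.liftSwap A hc := by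
  refine ⟨fun h => ?_, ?_⟩
  · obtain ⟨B, rfl⟩ | ⟨B, hc, rfl⟩ := hN.exists_eq_lift_or_liftSwap z <;>
      simp at h <;> subst h
    · exact Or.inl rfl
    · exact Or.inr ⟨hc, rfl⟩
  · rintro (rfl | ⟨hc, rfl⟩) <;> simp

lemma mapDomain_proj_apply_of_not_mem {A : Bases M} (hc : c ∉ A.1) (a : Bases N →₀ ℕ) :
    mapDomain hN.proj a A = a (hN.lift A) := by
  rw [mapDomain_apply_of_fiber (s := {hN.lift A}), Finset.sum_singleton]
  intro z
  simp [hN.proj_eq_iff, hc]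

lemma mapDomain_proj_apply_of_mem {A : Bases M} (hc : c ∈ A.1) (a : Bases N →₀ ℕ) :
    mapDomain hN.proj a A = a (hN.lift A) + a (hN.liftSwap A hc) := by
  classical
  rw [mapDomain_apply_of_fiber (s := {hN.lift A, hN.liftSwap A hc}),
    Finset.sum_pair (hN.lift_ne_liftSwap A A hc)]
  intro z
  simp [hN.proj_eq_iff, hc]

lemma mapDomain_mergeLast_baseExponent (z : Bases N) :
    mapDomain (mergeLast c) (baseExponent z) = baseExponent (hN.proj z) := by
  classical
  obtain ⟨A, rfl⟩ | ⟨A, hc, rfl⟩ := hN.exists_eq_lift_or_liftSwap z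
  · rw [proj_lift, mapDomain_baseExponent, lift, Finset.sum_map]
    simp [baseExponent]
  · rw [proj_liftSwap, mapDomain_baseExponent, liftSwap,
      Finset.sum_insert (by simp [Fin.castSucc_ne_last]), Finset.sum_map]
    simpa [baseExponent] using Finset.add_sum_erase _ (fun l => single l 1) hc

lemma mapDomain_mergeLast_linearCombination (a : Bases N →₀ ℕ) :
    mapDomain (mergeLast c) (linearCombination ℕ baseExponent a) =
      linearCombination ℕ baseExponent (mapDomain hN.proj a) := by
  rw [linearCombination_mapDomain]
  change lmapDomain ℕ ℕ (mergeLast c) _ = _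
  rw [apply_linearCombination]
  have h : ⇑(lmapDomain ℕ ℕ (mergeLast c)) ∘ baseExponent = baseExponent ∘ hN.proj :=
    funext hN.mapDomain_mergeLast_baseExponent
  rw [h]

theorem linearCombination_eq_iff {a b : Bases N →₀ ℕ} :
    linearCombination ℕ baseExponent a = linearCombination ℕ baseExponent b ↔
      linearCombination ℕ baseExponent (mapDomain hN.proj a) =
          linearCombination ℕ baseExponent (mapDomain hN.proj b) ∧
        linearCombination ℕ baseExponent a (Fin.last d) =
          linearCombination ℕ baseExponent b (Fin.last d) := by
  rw [← hN.mapDomain_mergeLast_linearCombination, ← hN.mapDomain_mergeLast_linearCombination]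
  exact ⟨fun h => ⟨by rw [h], by rw [h]⟩,
    fun ⟨h, hl⟩ => eq_of_mapDomain_mergeLast_eq h hl⟩

lemma baseExponent_add_eq_iff {i j k l : Bases N} :
    baseExponent i + baseExponent j = baseExponent k + baseExponent l ↔
      baseExponent (hN.proj i) + baseExponent (hN.proj j) =
          baseExponent (hN.proj k) + baseExponent (hN.proj l) ∧
        baseExponent i (Fin.last d) + baseExponent j (Fin.last d) =
          baseExponent k (Fin.last d) + baseExponent l (Fin.last d) := by
  have h :=
    hN.linearCombination_eq_iff (a := single i 1 + single j 1) (b := single k 1 + single l 1)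
  simp only [mapDomain_add, mapDomain_single, linearCombination_single_add_single] at h
  simpa using h

lemma baseExponent_last_le (z : Bases N) :
    baseExponent z (Fin.last d) ≤ baseExponent (hN.proj z) c := by
  classical
  obtain ⟨A, rfl⟩ | ⟨A, hc, rfl⟩ := hN.exists_eq_lift_or_liftSwap z
  · simp [baseExponent_apply, hN.last_not_mem_lift]
  · simp [baseExponent_apply, hN.last_mem_liftSwap, hc]

lemma exists_proj_eq_baseExponent_last (A : Bases M) {n : ℕ} (hn : n ≤ baseExponent A c) :
    ∃ z, hN.proj z = A ∧ baseExponent z (Fin.last d) = n := by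
  classical
  rw [baseExponent_apply] at hn
  split_ifs at hn with hc
  · rcases Nat.le_one_iff_eq_zero_or_eq_one.mp hn with rfl | rfl
    · exact ⟨hN.lift A, by simp [baseExponent_apply, hN.last_not_mem_lift]⟩
    · exact ⟨hN.liftSwap A hc, by simp [baseExponent_apply, hN.last_mem_liftSwap]⟩
  · exact ⟨hN.lift A, by simp [baseExponent_apply, hN.last_not_mem_lift, Nat.le_zero.mp hn]⟩

/-- The new element can be put into as many of the lifted bases as contain `c`. -/
lemma exists_move_of_mapDomain_proj_lt {mM : MonomialOrder (Bases M)}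
    (hM : HasQuadraticMoves mM baseExponent) {a b : Bases N →₀ ℕ}
    (hab : linearCombination ℕ baseExponent a = linearCombination ℕ baseExponent b)
    (hlt : mapDomain hN.proj b ≺[mM] mapDomain hN.proj a) :
    ∃ i j k l, single i 1 + single j 1 ≤ a ∧
      baseExponent i + baseExponent j = baseExponent k + baseExponent l ∧
      mapDomain hN.proj (single k 1 + single l 1) ≺[mM]
        mapDomain hN.proj (single i 1 + single j 1) := by
  obtain ⟨i, j, k, l, hle, he, hlt⟩ := hM _ _ (hN.linearCombination_eq_iff.mp hab).1 hlt
  obtain ⟨i', j', rfl, rfl, hle'⟩ := exists_pair_le_of_pair_le_mapDomain hle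
  have hc := congrArg (· c) he
  have hi := hN.baseExponent_last_le i'
  have hj := hN.baseExponent_last_le j'
  simp only [Finsupp.add_apply] at hc
  set n := baseExponent i' (Fin.last d) + baseExponent j' (Fin.last d)
  obtain ⟨k', rfl, hk⟩ := hN.exists_proj_eq_baseExponent_last k (min_le_right n _)
  obtain ⟨l', rfl, hl⟩ := hN.exists_proj_eq_baseExponent_last l
    (n := n - min n (baseExponent (hN.proj k') c)) (by omega)
  refine ⟨i', j', k', l', hle', hN.baseExponent_add_eq_iff.mpr ⟨he, by omega⟩, ?_⟩
  simpa [mapDomain_add] using hlt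

variable (ι : Bases M ↪ ℕ)

def key (z : Bases N) : ℕ ×ₗ Bool := toLex (ι (hN.proj z), decide (Fin.last d ∈ z.1))

lemma key_injective : Function.Injective (hN.key ι) := by
  intro z w h
  simp only [key, toLex_inj, Prod.mk.injEq, ι.injective.eq_iff, decide_eq_decide] at h
  obtain ⟨A, rfl⟩ | ⟨A, hc, rfl⟩ := hN.exists_eq_lift_or_liftSwap z <;>
  obtain ⟨B, rfl⟩ | ⟨B, hc', rfl⟩ := hN.exists_eq_lift_or_liftSwap w <;>
  simp [hN.last_not_mem_lift, hN.last_mem_liftSwap] at h <;> subst h <;> rfl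

lemma key_lt_key_of_proj_lt {z w : Bases N} (h : ι (hN.proj z) < ι (hN.proj w)) :
    hN.key ι z < hN.key ι w :=
  Prod.Lex.toLex_lt_toLex.mpr (Or.inl h)

lemma key_lift_lt_key_liftSwap (A : Bases M) (hc : c ∈ A.1) :
    hN.key ι (hN.lift A) < hN.key ι (hN.liftSwap A hc) :=
  Prod.Lex.toLex_lt_toLex.mpr
    (Or.inr ⟨by simp, by simp [hN.last_not_mem_lift, hN.last_mem_liftSwap]⟩)

noncomputable abbrev keyOrder : LinearOrder (Bases N) :=
  LinearOrder.lift' (hN.key ι) (hN.key_injective ι)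

noncomputable def lexOrder : MonomialOrder (Bases N) :=
  @MonomialOrder.lex _ (hN.keyOrder ι) (@Finite.to_wellFoundedGT _ _ (hN.keyOrder ι).toPreorder)

lemma lexOrder_lt_iff {a b : Bases N →₀ ℕ} :
    a ≺[hN.lexOrder ι] b ↔
      ∃ t, (∀ s, hN.key ι s < hN.key ι t → a s = b s) ∧ a t < b t :=
  @Finsupp.Lex.lt_iff _ _ _ (hN.keyOrder ι).toLT _ _ _

lemma pair_lt_pair {u v w x : Bases N} (hv : hN.key ι u < hN.key ι v)
    (hw : hN.key ι u < hN.key ι w) (hx : hN.key ι u < hN.key ι x) :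
    single v 1 + single w 1 ≺[hN.lexOrder ι] single u 1 + single x 1 :=
  @toLex_pair_lt_pair _ (hN.keyOrder ι) _ _ _ _ hv hw hx

lemma exists_eq_lift_of_first_diff {a b : Bases N →₀ ℕ}
    (hproj : mapDomain hN.proj b = mapDomain hN.proj a) {t : Bases N}
    (hbelow : ∀ s, hN.key ι s < hN.key ι t → b s = a s) (ht : b t < a t) :
    ∃ A hc, t = hN.lift A ∧ a (hN.liftSwap A hc) < b (hN.liftSwap A hc) := by
  have hfib (A : Bases M) := congrArg (· A) hproj
  obtain ⟨A, rfl⟩ | ⟨A, hc, rfl⟩ := hN.exists_eq_lift_or_liftSwap t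
  · by_cases hc : c ∈ A.1
    · have := hfib A
      simp only [hN.mapDomain_proj_apply_of_mem hc] at this
      exact ⟨A, hc, rfl, by omega⟩
    · have := hfib A
      simp only [hN.mapDomain_proj_apply_of_not_mem hc] at this
      omega
  · have := hfib A
    have hx := hbelow _ (hN.key_lift_lt_key_liftSwap ι A hc)
    simp only [hN.mapDomain_proj_apply_of_mem hc] at this
    omega

lemma exists_liftSwap_of_last_eq {a b : Bases N →₀ ℕ}
    (hlast : linearCombination ℕ baseExponent b (Fin.last d) =
      linearCombination ℕ baseExponent a (Fin.last d))
    {A : Bases M} {hc : c ∈ A.1}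
    (hbelow : ∀ s, hN.key ι s < hN.key ι (hN.lift A) → b s = a s)
    (hy : a (hN.liftSwap A hc) < b (hN.liftSwap A hc)) :
    ∃ B hcB, ι A < ι B ∧ 1 ≤ a (hN.liftSwap B hcB) := by
  classical
  have : Fintype (Bases N) := Fintype.ofFinite _
  by_contra! H
  -- otherwise `b` has more factors containing the new element than `a`
  rw [linearCombination_apply_eq_sum, linearCombination_apply_eq_sum] at hlast
  refine (Finset.sum_lt_sum (fun z _ => ?_) ⟨hN.liftSwap A hc, Finset.mem_univ _, ?_⟩).ne' hlast
  · obtain ⟨B, rfl⟩ | ⟨B, hcB, rfl⟩ := hN.exists_eq_lift_or_liftSwap z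
    · simp [baseExponent_apply, hN.last_not_mem_lift]
    · simp only [baseExponent_apply, hN.last_mem_liftSwap, if_true, mul_one]
      rcases lt_trichotomy (ι B) (ι A) with h | h | h
      · exact (hbelow _ (hN.key_lt_key_of_proj_lt ι (by simpa using h))).ge
      · obtain rfl := ι.injective h
        exact hy.le
      · have := H B hcB h
        omega
  · simpa [baseExponent_apply, hN.last_mem_liftSwap] using hy

lemma exists_move_of_mapDomain_proj_eq {a b : Bases N →₀ ℕ}
    (hab : linearCombination ℕ baseExponent a = linearCombination ℕ baseExponent b)
    (hproj : mapDomain hN.proj b = mapDomain hN.proj a) (hlt : b ≺[hN.lexOrder ι] a) :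
    ∃ i j k l, single i 1 + single j 1 ≤ a ∧
      baseExponent i + baseExponent j = baseExponent k + baseExponent l ∧
      mapDomain hN.proj (single k 1 + single l 1) = mapDomain hN.proj (single i 1 + single j 1) ∧
      single k 1 + single l 1 ≺[hN.lexOrder ι] single i 1 + single j 1 := by
  obtain ⟨t, hbelow, ht⟩ := (hN.lexOrder_lt_iff ι).mp hlt
  obtain ⟨A, hc, rfl, hy⟩ := hN.exists_eq_lift_of_first_diff ι hproj hbelow ht
  obtain ⟨B, hcB, hAB, hB⟩ :=
    hN.exists_liftSwap_of_last_eq ι (hN.linearCombination_eq_iff.mp hab).2.symm hbelow hy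
  have hAA := hN.key_lift_lt_key_liftSwap ι A hc
  have hAB₁ : hN.key ι (hN.lift A) < hN.key ι (hN.lift B) :=
    hN.key_lt_key_of_proj_lt ι (by simpa using hAB)
  have hAB₂ : hN.key ι (hN.lift A) < hN.key ι (hN.liftSwap B hcB) :=
    hN.key_lt_key_of_proj_lt ι (by simpa using hAB)
  refine ⟨hN.lift A, hN.liftSwap B hcB, hN.liftSwap A hc, hN.lift B,
    single_add_single_le (hN.lift_ne_liftSwap A B hcB) (by omega) hB,
    hN.baseExponent_add_eq_iff.mpr ⟨by simp, ?_⟩,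
    by simp [mapDomain_add], hN.pair_lt_pair ι hAA hAB₁ hAB₂⟩
  simp [baseExponent_apply, hN.last_not_mem_lift, hN.last_mem_liftSwap]

theorem hasQuadraticMoves {mM : MonomialOrder (Bases M)}
    (hM : HasQuadraticMoves mM baseExponent) :
    HasQuadraticMoves (MonomialOrder.comapLex hN.proj mM (hN.lexOrder ι)) baseExponent := by
  intro a b hab hlt
  rcases (MonomialOrder.comapLex_lt_iff _ _ _).mp hlt with hlt | ⟨hproj, hlt⟩
  · obtain ⟨i, j, k, l, hle, he, hlt⟩ := hN.exists_move_of_mapDomain_proj_lt hM hab hlt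
    exact ⟨i, j, k, l, hle, he, (MonomialOrder.comapLex_lt_iff _ _ _).mpr (Or.inl hlt)⟩
  · obtain ⟨i, j, k, l, hle, he, hproj, hlt⟩ :=
      hN.exists_move_of_mapDomain_proj_eq ι hab hproj hlt
    exact ⟨i, j, k, l, hle, he,
      (MonomialOrder.comapLex_lt_iff _ _ _).mpr (Or.inr ⟨hproj, hlt⟩)⟩

end IsParallelExtension

end ParallelExtension

/-- If the toric ideal of `M` has a quadratic Gröbner basis, then so does the toric ideal
of the parallel extension `(M✶ +_c (d+1))✶` of `M` at `c` by `d+1`; here `M'` is the series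
extension `M✶ +_c (d+1)` of the dual matroid. -/
theorem statement9 (K : Type) [Field K] {d : ℕ}
    (M : Matroid (Fin d)) (hE : M.E = Set.univ) (c : Fin d)
    (M' : Matroid (Fin (d + 1))) (hE' : M'.E = Set.univ)
    (hM' : ∀ S : Set (Fin (d + 1)), M'.IsBase S ↔
      ((∃ B : Set (Fin d), (M✶).IsBase B ∧ S = Fin.castSucc '' B ∪ {Fin.last d}) ∨
       (∃ B : Set (Fin d), (M✶).IsBase B ∧ c ∉ B ∧
          S = Fin.castSucc '' B ∪ {Fin.castSucc c})))
    (h : HasQuadraticGroebnerBasis (matroidToricIdeal K M)) :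
    HasQuadraticGroebnerBasis (matroidToricIdeal K (M'✶)) := by
  have hN := isParallelExtension_dual hE hE' hM'
  obtain ⟨mM, hM⟩ := (hasQuadraticGroebnerBasis_ker_iff (matroidToricMap_X K)).mp h
  obtain ⟨ι, hι⟩ := Countable.exists_injective_nat (Bases M)
  exact (hasQuadraticGroebnerBasis_ker_iff (matroidToricMap_X K)).mpr
    ⟨_, hN.hasQuadraticMoves ⟨ι, hι⟩ hM⟩
end
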